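/- For the block subdiagonal matrix M with blocks W₁,…,Wₙ, the n-th power M^n has exactly one possibly nonzero block, namely the product Wₙ·Wₙ₋₁·…·W₁ in the bottom-left block position. -/

import Mathlib

/-- The product `W i * W (i-1) * ⋯ * W 1` of the subdiagonal blocks, as a map from
block `0` to block `i`. -/
def chainProd {n : ℕ} (d : Fin (n + 1) → ℕ)
    (W : ∀ i : Fin n, Matrix (Fin (d i.succ)) (Fin (d i.castSucc)) ℝ) :
    ∀ (i : ℕ) (h : i < n + 1), Matrix (Fin (d ⟨i, h⟩)) (Fin (d ⟨0, Nat.succ_pos n⟩)) ℝ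
  | 0, _ => 1
  | i + 1, h =>
      (show Matrix (Fin (d ⟨i + 1, h⟩)) (Fin (d ⟨i, Nat.lt_of_succ_lt h⟩)) ℝ from
          W ⟨i, Nat.lt_of_succ_lt_succ h⟩) *
        chainProd d W i (Nat.lt_of_succ_lt h)

/-- `M^n` of a block subdiagonal matrix has exactly one possibly nonzero block: the
product `Wₙ⋯W₁` in the bottom-left block position `(n, 0)`. -/
theorem block_subdiagonal_pow_n (n : ℕ) (d : Fin (n + 1) → ℕ)
    (W : ∀ i : Fin n, Matrix (Fin (d i.succ)) (Fin (d i.castSucc)) ℝ)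
    (M : Matrix ((i : Fin (n + 1)) × Fin (d i)) ((i : Fin (n + 1)) × Fin (d i)) ℝ)
    (hsub : ∀ (i : Fin n) (a : Fin (d i.succ)) (b : Fin (d i.castSucc)),
      M ⟨i.succ, a⟩ ⟨i.castSucc, b⟩ = W i a b)
    (hzero : ∀ (i j : Fin (n + 1)) (a : Fin (d i)) (b : Fin (d j)),
      (i : ℕ) ≠ (j : ℕ) + 1 → M ⟨i, a⟩ ⟨j, b⟩ = 0) :
    (∀ (a : Fin (d ⟨n, Nat.lt_succ_self n⟩)) (b : Fin (d ⟨0, Nat.succ_pos n⟩)),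
        (M ^ n) ⟨⟨n, Nat.lt_succ_self n⟩, a⟩ ⟨⟨0, Nat.succ_pos n⟩, b⟩ =
          chainProd d W n (Nat.lt_succ_self n) a b) ∧
    (∀ (i j : Fin (n + 1)) (a : Fin (d i)) (b : Fin (d j)),
        ¬((i : ℕ) = n ∧ (j : ℕ) = 0) → (M ^ n) ⟨i, a⟩ ⟨j, b⟩ = 0) := by
  have hz : ∀ (k : ℕ) (i j : Fin (n + 1)) (a : Fin (d i)) (b : Fin (d j)),
      (i : ℕ) ≠ (j : ℕ) + k → (M ^ k) ⟨i, a⟩ ⟨j, b⟩ = 0 := by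
    intro k
    induction k with
    | zero =>
      intro i j a b hij
      rw [pow_zero, Matrix.one_apply_ne]
      intro h
      exact hij (by cases h; simp)
    | succ k ih =>
      intro i j a b hij
      rw [pow_succ, Matrix.mul_apply]
      apply Finset.sum_eq_zero
      rintro ⟨l, c⟩ -
      by_cases hl : (l : ℕ) = (j : ℕ) + 1
      · rw [ih i l a c (by omega), zero_mul]
      · rw [hzero l j c b hl, mul_zero]
  have hc : ∀ (k : ℕ) (hk : k < n + 1) (a : Fin (d ⟨k, hk⟩)) (b : Fin (d ⟨0, Nat.succ_pos n⟩)),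
      (M ^ k) ⟨⟨k, hk⟩, a⟩ ⟨⟨0, Nat.succ_pos n⟩, b⟩ = chainProd d W k hk a b := by
    intro k
    induction k with
    | zero =>
      intro hk a b
      rw [pow_zero]
      show (1 : Matrix _ _ ℝ) _ _ = (1 : Matrix (Fin (d ⟨0, hk⟩)) _ ℝ) a b
      simp only [Matrix.one_apply, Sigma.mk.inj_iff, heq_eq_eq, true_and]
    | succ k ih =>
      intro hk a b
      have hkn : k < n := Nat.lt_of_succ_lt_succ hk
      have hk' : k < n + 1 := Nat.lt_of_succ_lt hk
      rw [pow_succ', Matrix.mul_apply, ← Finset.univ_sigma_univ, Finset.sum_sigma]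
      rw [Finset.sum_eq_single (⟨k, hk'⟩ : Fin (n + 1))]
      · have : ∀ c : Fin (d ⟨k, hk'⟩),
            M ⟨⟨k + 1, hk⟩, a⟩ ⟨⟨k, hk'⟩, c⟩ = W ⟨k, hkn⟩ a c := fun c =>
          hsub ⟨k, hkn⟩ a c
        calc ∑ c : Fin (d ⟨k, hk'⟩),
              M ⟨⟨k + 1, hk⟩, a⟩ ⟨⟨k, hk'⟩, c⟩ * (M ^ k) ⟨⟨k, hk'⟩, c⟩ ⟨⟨0, Nat.succ_pos n⟩, b⟩
            = ∑ c : Fin (d ⟨k, hk'⟩), W ⟨k, hkn⟩ a c * chainProd d W k hk' c b := by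
              refine Finset.sum_congr rfl fun c _ => ?_
              rw [this c, ih hk' c b]
          _ = chainProd d W (k + 1) hk a b := by
              rw [chainProd, Matrix.mul_apply]
      · intro l _ hl
        apply Finset.sum_eq_zero
        intro c _
        have : (l : ℕ) ≠ k := fun h => hl (Fin.ext h)
        rw [hzero ⟨k + 1, hk⟩ l a c (by simp only [Fin.val_mk]; omega), zero_mul]
      · intro h
        exact absurd (Finset.mem_univ _) h
  refine ⟨fun a b => hc n (Nat.lt_succ_self n) a b, fun i j a b h => ?_⟩
  apply hz n i j a b
  have hi := i.isLt
  omega
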